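/- Let n ≥ 2 be even with n/2 odd. The characteristic polynomial of the adjacency matrix of the conjugacy supercommuting graph of D_{2n} equals (λ+1)^(3n/2 - 3) times (λ+1)^(n/2 - 1)·(λ⁴ + (4-2n)λ³ + (n²-8n+6)λ² + (4n²-14n+4)λ + 3n² - 8n + 1); i.e., the spectrum is -1 with multiplicity 2n-4 together with the four roots of x⁴ + (4-2n)x³ + (n²-8n+6)x² + (4n²-14n+4)x + 3n² - 8n + 1 = 0. -/
import Mathlib


open Matrix Polynomial
open scoped Classical

/-- Adjacency matrix (over `ℂ`) of the conjugacy supercommuting graph of a group `G`: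
distinct vertices `g, h` are adjacent iff they are conjugate, or some element conjugate
to `g` and some element conjugate to `h` are adjacent in the commuting graph of `G`. -/
noncomputable def cscomAdj (G : Type*) [Group G] : Matrix G G ℂ :=
  Matrix.of fun g h =>
    if g ≠ h ∧ (IsConj g h ∨
        ∃ x y : G, IsConj g x ∧ IsConj h y ∧ x ≠ y ∧ Commute x y) then 1 else 0

namespace CSComAux

open DihedralGroup

variable {n : ℕ}

lemma r_inv (i : ZMod n) : (DihedralGroup.r i)⁻¹ = DihedralGroup.r (-i) := rfl
lemma sr_inv (i : ZMod n) : (DihedralGroup.sr i)⁻¹ = DihedralGroup.sr i := rfl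

lemma isConj_r_iff (i : ZMod n) (x : DihedralGroup n) :
    IsConj (DihedralGroup.r i) x ↔ x = DihedralGroup.r i ∨ x = DihedralGroup.r (-i) := by
  rw [isConj_iff]
  constructor
  · rintro ⟨c, hc'⟩
    rcases c with k | k
    · left
      rw [← hc']
      simp only [r_inv, r_mul_r, DihedralGroup.r.injEq]
      ring
    · right
      rw [← hc']
      simp only [sr_inv, r_mul_sr, sr_mul_sr, sr_mul_r, DihedralGroup.r.injEq]
      ring
  · rintro (rfl | rfl)
    · exact ⟨1, by group⟩
    · refine ⟨DihedralGroup.sr 0, ?_⟩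
      simp only [sr_inv, sr_mul_r, sr_mul_sr, DihedralGroup.r.injEq]
      ring

lemma isConj_sr_iff (i : ZMod n) (x : DihedralGroup n) :
    IsConj (DihedralGroup.sr i) x ↔
      ∃ k : ZMod n, x = DihedralGroup.sr (i - 2 * k) ∨ x = DihedralGroup.sr (2 * k - i) := by
  rw [isConj_iff]
  constructor
  · rintro ⟨c, hc'⟩
    rcases c with k | k
    · refine ⟨k, Or.inl ?_⟩
      rw [← hc']
      simp only [r_inv, r_mul_sr, sr_mul_r, DihedralGroup.sr.injEq]
      ring
    · refine ⟨k, Or.inr ?_⟩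
      rw [← hc']
      simp only [sr_inv, sr_mul_sr, r_mul_sr, sr_mul_r, DihedralGroup.sr.injEq]
      ring
  · rintro ⟨k, rfl | rfl⟩
    · refine ⟨DihedralGroup.r k, ?_⟩
      simp only [r_inv, r_mul_sr, sr_mul_r, DihedralGroup.sr.injEq]
      ring
    · refine ⟨DihedralGroup.sr k, ?_⟩
      simp only [sr_inv, sr_mul_sr, r_mul_sr, DihedralGroup.sr.injEq]
      ring

lemma commute_r_r (i j : ZMod n) : Commute (DihedralGroup.r i) (DihedralGroup.r j) := by
  simp [Commute, SemiconjBy, add_comm]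

lemma commute_r_sr_iff (i j : ZMod n) :
    Commute (DihedralGroup.r i) (DihedralGroup.sr j) ↔ 2 * i = 0 := by
  simp only [Commute, SemiconjBy, r_mul_sr, sr_mul_r, DihedralGroup.sr.injEq]
  constructor <;> intro h <;> linear_combination -h

lemma commute_sr_sr_iff (i j : ZMod n) :
    Commute (DihedralGroup.sr i) (DihedralGroup.sr j) ↔ 2 * i = 2 * j := by
  simp only [Commute, SemiconjBy, sr_mul_sr, DihedralGroup.r.injEq]
  constructor <;> intro h <;> linear_combination -h

lemma par_eq_zero_iff (hn : 2 ∣ n) [NeZero n] (x : ZMod n) :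
    ZMod.castHom hn (ZMod 2) x = 0 ↔ ∃ k : ZMod n, x = 2 * k := by
  constructor
  · intro h
    have hv : ((x.val : ℕ) : ZMod 2) = 0 := by
      rwa [ZMod.castHom_apply, ZMod.cast_eq_val] at h
    obtain ⟨m, hm⟩ := (ZMod.natCast_eq_zero_iff _ _).mp hv
    refine ⟨(m : ZMod n), ?_⟩
    have : ((x.val : ℕ) : ZMod n) = x := ZMod.natCast_zmod_val x
    rw [← this, hm]
    push_cast
    ring
  · rintro ⟨k, rfl⟩
    rw [_root_.map_mul]
    have h2 : (ZMod.castHom hn (ZMod 2)) (2 : ZMod n) = 0 := by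
      rw [show (2 : ZMod n) = ((2 : ℕ) : ZMod n) by push_cast; ring, map_natCast]
      decide
    rw [h2, zero_mul]

lemma natCast_eq_one_of_odd {m : ℕ} (hm : Odd m) : ((m : ZMod 2)) = 1 := by
  rw [← ZMod.natCast_mod m 2, Nat.odd_iff.mp hm]
  rfl

lemma two_mul_eq_zero_iff [NeZero n] (hn2 : 2 ≤ n) (heven : Even n) (i : ZMod n) :
    2 * i = 0 ↔ i = 0 ∨ i = ((n / 2 : ℕ) : ZMod n) := by
  obtain ⟨m, hm⟩ := heven
  have hnm : n = 2 * m := by omega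
  have hm0 : 0 < m := by omega
  have hval : ((i.val : ℕ) : ZMod n) = i := ZMod.natCast_zmod_val i
  constructor
  · intro h
    have h2 : ((2 * i.val : ℕ) : ZMod n) = 0 := by push_cast [hval]; exact h
    have hdvd : n ∣ 2 * i.val := (ZMod.natCast_eq_zero_iff _ _).mp h2
    have hlt : i.val < n := ZMod.val_lt i
    rcases hdvd with ⟨c, hc⟩
    have hc2 : c < 2 := by nlinarith
    interval_cases c
    · left
      have : i.val = 0 := by omega
      rw [← hval, this]; simp
    · right
      have : i.val = n / 2 := by omega
      rw [← hval, this]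
  · rintro (rfl | rfl)
    · ring
    · have : ((2 * (n / 2) : ℕ) : ZMod n) = ((n : ℕ) : ZMod n) := by
        congr 1; omega
      push_cast at this
      rw [this]
      simp

lemma halfn_ne_zero [NeZero n] (hn2 : 2 ≤ n) : ((n / 2 : ℕ) : ZMod n) ≠ 0 := by
  intro h
  have h1 := (ZMod.natCast_eq_zero_iff _ _).mp h
  have h2 := Nat.le_of_dvd (by omega) h1
  omega

lemma isConj_sr_iff_par (hn : 2 ∣ n) [NeZero n] (a b : ZMod n) :
    IsConj (DihedralGroup.sr a) (DihedralGroup.sr b) ↔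
      ZMod.castHom hn (ZMod 2) a = ZMod.castHom hn (ZMod 2) b := by
  have h2 : (ZMod.castHom hn (ZMod 2)) (2 : ZMod n) = 0 := by
    rw [show (2 : ZMod n) = ((2 : ℕ) : ZMod n) by push_cast; ring, map_natCast]
    decide
  constructor
  · intro h
    rcases (isConj_sr_iff a _).mp h with ⟨k, hk | hk⟩ <;>
      [(obtain h' : b = a - 2 * k := by injection hk);
       (obtain h' : b = 2 * k - a := by injection hk)]
    · rw [h', map_sub, _root_.map_mul, h2, zero_mul, sub_zero]
    · rw [h', map_sub, _root_.map_mul, h2, zero_mul, zero_sub]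
      exact (CharTwo.neg_eq _).symm
  · intro h
    have : ZMod.castHom hn (ZMod 2) (a - b) = 0 := by rw [map_sub, h, sub_self]
    obtain ⟨k, hk⟩ := (par_eq_zero_iff hn _).mp this
    refine (isConj_sr_iff a _).mpr ⟨k, Or.inl ?_⟩
    congr 1
    linear_combination -hk

noncomputable def zf (n : ℕ) : DihedralGroup n → ℂ
  | .r i => if 2 * i = 0 then 1 else 0
  | .sr _ => 0

noncomputable def rf (n : ℕ) : DihedralGroup n → ℂ
  | .r i => if 2 * i = 0 then 0 else 1
  | .sr _ => 0

def sf (n : ℕ) : DihedralGroup n → ℂ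
  | .r _ => 0
  | .sr _ => 1

noncomputable def Umat (n : ℕ) : Matrix (DihedralGroup n) (Fin 3) ℂ :=
  Matrix.of fun g j => ![zf n g, rf n g, sf n g] j

noncomputable def Vmat (n : ℕ) : Matrix (Fin 3) (DihedralGroup n) ℂ :=
  Matrix.of fun j h => ![1, zf n h + rf n h, zf n h + sf n h] j

theorem adj_eq [NeZero n] (hn2 : 2 ≤ n) (heven : Even n) (hodd : Odd (n / 2)) :
    cscomAdj (DihedralGroup n) = Umat n * Vmat n - 1 := by
  have hdvd : 2 ∣ n := heven.two_dvd
  ext g h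
  rw [Matrix.sub_apply, Matrix.mul_apply, Fin.sum_univ_three]
  simp only [Umat, Vmat, Matrix.of_apply, Matrix.cons_val_zero, Matrix.cons_val_one,
    Matrix.head_cons, Matrix.cons_val_two, Matrix.tail_cons, cscomAdj, Matrix.one_apply]
  rcases g with i | i <;> rcases h with j | j
  · -- r i, r j
    by_cases hij : i = j
    · subst hij
      simp only [ne_eq, not_true_eq_false, false_and, if_false, if_pos rfl]
      simp only [zf, rf, sf]
      by_cases h2 : 2 * i = 0 <;> simp [h2]
    · have hcond : (DihedralGroup.r i ≠ DihedralGroup.r j ∧ (IsConj (DihedralGroup.r i) (DihedralGroup.r j) ∨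
          ∃ x y : DihedralGroup n, IsConj (DihedralGroup.r i) x ∧ IsConj (DihedralGroup.r j) y ∧ x ≠ y ∧ Commute x y)) := by
        refine ⟨by simp [hij], Or.inr ⟨DihedralGroup.r i, DihedralGroup.r j, IsConj.refl _,
          IsConj.refl _, by simp [hij], commute_r_r i j⟩⟩
      rw [if_pos hcond, if_neg (by simp [hij])]
      simp only [zf, rf, sf]
      by_cases h2 : 2 * i = 0 <;> by_cases h2' : 2 * j = 0 <;> simp [h2, h2']
  · -- r i, sr j
    rw [if_neg (show ¬(DihedralGroup.r i = DihedralGroup.sr j) from by simp)]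
    simp only [zf, rf, sf]
    by_cases h2 : 2 * i = 0
    · have hcond : (DihedralGroup.r i ≠ DihedralGroup.sr j ∧ (IsConj (DihedralGroup.r i) (DihedralGroup.sr j) ∨
          ∃ x y : DihedralGroup n, IsConj (DihedralGroup.r i) x ∧ IsConj (DihedralGroup.sr j) y ∧ x ≠ y ∧ Commute x y)) := by
        refine ⟨by simp, Or.inr ⟨DihedralGroup.r i, DihedralGroup.sr j, IsConj.refl _,
          IsConj.refl _, by simp, (commute_r_sr_iff i j).mpr h2⟩⟩
      rw [if_pos hcond]
      simp [h2]
    · rw [if_neg ?_]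
      · simp [h2]
      rintro ⟨-, hconj | ⟨x, y, hx, hy, hxy, hcomm⟩⟩
      · rcases (isConj_r_iff i _).mp hconj with h1 | h1 <;> exact absurd h1 (by simp)
      · rcases (isConj_sr_iff j y).mp hy with ⟨k, hy1 | hy1⟩ <;>
          rcases (isConj_r_iff i x).mp hx with hx1 | hx1 <;>
        · rw [hx1, hy1] at hcomm
          have hcc := (commute_r_sr_iff _ _).mp hcomm
          apply h2
          first
          | linear_combination hcc
          | linear_combination -hcc
  · -- sr i, r j
    rw [if_neg (show ¬(DihedralGroup.sr i = DihedralGroup.r j) from by simp)]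
    simp only [zf, rf, sf]
    by_cases h2 : 2 * j = 0
    · have hcond : (DihedralGroup.sr i ≠ DihedralGroup.r j ∧ (IsConj (DihedralGroup.sr i) (DihedralGroup.r j) ∨
          ∃ x y : DihedralGroup n, IsConj (DihedralGroup.sr i) x ∧ IsConj (DihedralGroup.r j) y ∧ x ≠ y ∧ Commute x y)) := by
        refine ⟨by simp, Or.inr ⟨DihedralGroup.sr i, DihedralGroup.r j, IsConj.refl _,
          IsConj.refl _, by simp, ((commute_r_sr_iff j i).mpr h2).symm⟩⟩
      rw [if_pos hcond]
      simp [h2]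
    · rw [if_neg ?_]
      · simp [h2]
      rintro ⟨-, hconj | ⟨x, y, hx, hy, hxy, hcomm⟩⟩
      · rcases (isConj_sr_iff i _).mp hconj with ⟨k, h1 | h1⟩ <;> exact absurd h1 (by simp)
      · rcases (isConj_sr_iff i x).mp hx with ⟨k, hx1 | hx1⟩ <;>
          rcases (isConj_r_iff j y).mp hy with hy1 | hy1 <;>
        · rw [hx1, hy1] at hcomm
          have hcc := (commute_r_sr_iff _ _).mp hcomm.symm
          apply h2
          first
          | linear_combination hcc
          | linear_combination -hcc
  · -- sr i, sr j
    by_cases hij : i = j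
    · subst hij
      rw [if_neg (by simp), if_pos rfl]
      simp [zf, rf, sf]
    · have hcond : (DihedralGroup.sr i ≠ DihedralGroup.sr j ∧ (IsConj (DihedralGroup.sr i) (DihedralGroup.sr j) ∨
          ∃ x y : DihedralGroup n, IsConj (DihedralGroup.sr i) x ∧ IsConj (DihedralGroup.sr j) y ∧ x ≠ y ∧ Commute x y)) := by
        refine ⟨by simp [hij], ?_⟩
        by_cases hpar : ZMod.castHom hdvd (ZMod 2) i = ZMod.castHom hdvd (ZMod 2) j
        · exact Or.inl ((isConj_sr_iff_par hdvd i j).mpr hpar)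
        · refine Or.inr ⟨DihedralGroup.sr i, DihedralGroup.sr (i - ((n / 2 : ℕ) : ZMod n)),
            IsConj.refl _, ?_, ?_, ?_⟩
          · refine (isConj_sr_iff_par hdvd j _).mpr ?_
            have hone : (ZMod.castHom hdvd (ZMod 2)) (((n / 2 : ℕ) : ZMod n)) = 1 := by
              rw [map_natCast]
              exact natCast_eq_one_of_odd hodd
            have hne2 : ∀ a b : ZMod 2, a ≠ b → b = a + 1 := by decide
            have hpq := hne2 _ _ hpar
            rw [map_sub, hone, hpq]
            have h22 : (2 : ZMod 2) = 0 := by decide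
            linear_combination h22
          · simp only [ne_eq, DihedralGroup.sr.injEq]
            intro hcontra
            exact halfn_ne_zero hn2 (by linear_combination hcontra)
          · refine (commute_sr_sr_iff _ _).mpr ?_
            have hzz : ((2 * (n / 2) : ℕ) : ZMod n) = 0 := by
              rw [show 2 * (n / 2) = n by omega]
              simp
            push_cast at hzz
            linear_combination hzz
      rw [if_pos hcond, if_neg (by simp [hij])]
      simp [zf, rf, sf]

def dihEquiv (n : ℕ) : (ZMod n) ⊕ (ZMod n) ≃ DihedralGroup n where
  toFun x := match x with
    | Sum.inl j => DihedralGroup.r j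
    | Sum.inr j => DihedralGroup.sr j
  invFun g := match g with
    | DihedralGroup.r j => Sum.inl j
    | DihedralGroup.sr j => Sum.inr j
  left_inv := by rintro (x | x) <;> rfl
  right_inv := by rintro (x | x) <;> rfl

lemma sum_dih {M : Type*} [AddCommMonoid M] [NeZero n] (f : DihedralGroup n → M) :
    ∑ g, f g = (∑ i : ZMod n, f (DihedralGroup.r i)) + ∑ i : ZMod n, f (DihedralGroup.sr i) := by
  rw [← Fintype.sum_equiv (dihEquiv n) (fun x => f (dihEquiv n x)) f (fun x => rfl),
    Fintype.sum_sum_type]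
  rfl

lemma sum_ite_two [NeZero n] (hn2 : 2 ≤ n) (heven : Even n) :
    (∑ i : ZMod n, if 2 * i = 0 then (1 : ℂ) else 0) = 2 := by
  rw [Finset.sum_boole]
  have hfil : Finset.univ.filter (fun i : ZMod n => 2 * i = 0)
      = {0, ((n / 2 : ℕ) : ZMod n)} := by
    ext i
    simp [two_mul_eq_zero_iff hn2 heven i]
  rw [hfil, Finset.card_insert_of_notMem (by simpa using (halfn_ne_zero hn2).symm),
    Finset.card_singleton]
  norm_num

lemma sum_zf [NeZero n] (hn2 : 2 ≤ n) (heven : Even n) : ∑ g, zf n g = 2 := by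
  rw [sum_dih]
  simp only [zf]
  rw [sum_ite_two hn2 heven]
  simp

lemma sum_rf [NeZero n] (hn2 : 2 ≤ n) (heven : Even n) : ∑ g, rf n g = (n : ℂ) - 2 := by
  rw [sum_dih]
  simp only [rf]
  have hpt : ∀ i : ZMod n, (if 2 * i = 0 then (0:ℂ) else 1) = 1 - (if 2 * i = 0 then 1 else 0) := by
    intro i; split <;> ring
  rw [Finset.sum_congr rfl (fun i _ => hpt i), Finset.sum_sub_distrib, sum_ite_two hn2 heven]
  simp [ZMod.card]

lemma sum_sf [NeZero n] : ∑ g, sf n g = (n : ℂ) := by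
  rw [sum_dih]
  simp [sf, ZMod.card]

noncomputable def Wmat (n : ℕ) : Matrix (Fin 3) (Fin 3) ℂ :=
  !![2, (n:ℂ)-2, (n:ℂ); 2, (n:ℂ)-2, 0; 2, 0, (n:ℂ)]

lemma VU_eq [NeZero n] (hn2 : 2 ≤ n) (heven : Even n) : Vmat n * Umat n = Wmat n := by
  have hzz : ∀ g : DihedralGroup n, zf n g * zf n g = zf n g := by
    rintro (i | i)
    · by_cases h : 2 * i = 0 <;> simp [zf, h]
    · simp [zf]
  have hzr : ∀ g : DihedralGroup n, zf n g * rf n g = 0 := by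
    rintro (i | i)
    · by_cases h : 2 * i = 0 <;> simp [zf, rf, h]
    · simp [zf, rf]
  have hzs : ∀ g : DihedralGroup n, zf n g * sf n g = 0 := by
    rintro (i | i) <;> simp [zf, sf]
  have hrr : ∀ g : DihedralGroup n, rf n g * rf n g = rf n g := by
    rintro (i | i)
    · by_cases h : 2 * i = 0 <;> simp [rf, h]
    · simp [rf]
  have hrs : ∀ g : DihedralGroup n, rf n g * sf n g = 0 := by
    rintro (i | i) <;> simp [rf, sf]
  have hss : ∀ g : DihedralGroup n, sf n g * sf n g = sf n g := by
    rintro (i | i) <;> simp [sf]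
  ext i j
  fin_cases i <;> fin_cases j <;>
    simp [Matrix.mul_apply, Vmat, Umat, Wmat]
  · exact sum_zf hn2 heven
  · exact sum_rf hn2 heven
  · exact sum_sf
  · rw [show ∑ x, (zf n x + rf n x) * zf n x = ∑ x, zf n x from
      Finset.sum_congr rfl fun g _ => by
        rw [add_mul, hzz g, mul_comm (rf n g) (zf n g), hzr g, add_zero]]
    exact sum_zf hn2 heven
  · rw [show ∑ x, (zf n x + rf n x) * rf n x = ∑ x, rf n x from
      Finset.sum_congr rfl fun g _ => by rw [add_mul, hzr g, hrr g, zero_add]]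
    exact sum_rf hn2 heven
  · rw [show ∑ x, (zf n x + rf n x) * sf n x = ∑ x, (0:ℂ) from
      Finset.sum_congr rfl fun g _ => by rw [add_mul, hzs g, hrs g, add_zero]]
    simp
  · rw [show ∑ x, (zf n x + sf n x) * zf n x = ∑ x, zf n x from
      Finset.sum_congr rfl fun g _ => by
        rw [add_mul, hzz g, mul_comm (sf n g) (zf n g), hzs g, add_zero]]
    exact sum_zf hn2 heven
  · rw [show ∑ x, (zf n x + sf n x) * rf n x = ∑ x, (0:ℂ) from
      Finset.sum_congr rfl fun g _ => by
        rw [add_mul, hzr g, mul_comm (sf n g) (rf n g), hrs g, add_zero]]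
    simp
  · rw [show ∑ x, (zf n x + sf n x) * sf n x = ∑ x, sf n x from
      Finset.sum_congr rfl fun g _ => by rw [add_mul, hzs g, hss g, zero_add]]
    exact sum_sf

lemma det_cw (c : ℂ) :
    Matrix.det (c • (1 : Matrix (Fin 3) (Fin 3) ℂ) - Wmat n)
      = c^3 - 2*(n:ℂ)*c^2 + (n:ℂ)*((n:ℂ)-2)*c + 2*(n:ℂ)*((n:ℂ)-2) := by
  simp [Wmat, Matrix.det_fin_three, Matrix.smul_apply, Matrix.one_apply, Matrix.sub_apply,
    Matrix.vecHead, Matrix.vecTail]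
  ring

lemma eval_charpoly' {m : Type*} [Fintype m] [DecidableEq m] (M : Matrix m m ℂ) (x : ℂ) :
    (M.charpoly).eval x = Matrix.det (x • (1 : Matrix m m ℂ) - M) := by
  rw [Matrix.charpoly, show (Polynomial.eval x : ℂ[X] → ℂ) = ⇑(Polynomial.evalRingHom x) from rfl,
    RingHom.map_det]
  congr 1
  ext i j
  by_cases h : i = j
  · subst h
    simp [Matrix.charmatrix_apply_eq, Matrix.one_apply]
  · simp [Matrix.charmatrix_apply_ne _ _ _ h, Matrix.one_apply, Ne.symm h, h]

lemma det_swap {m : Type*} [Fintype m] [DecidableEq m] (c : ℂ) (hc : c ≠ 0)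
    (B : Matrix m (Fin 3) ℂ) (D : Matrix (Fin 3) m ℂ) :
    Matrix.det (c • (1 : Matrix m m ℂ) - B * D)
      = c ^ (Fintype.card m) * (c⁻¹)^3 *
        Matrix.det (c • (1 : Matrix (Fin 3) (Fin 3) ℂ) - D * B) := by
  have hm : c * -(c⁻¹) = -1 := by field_simp
  have h1 : c • ((1 : Matrix m m ℂ) + ((-(c⁻¹)) • B) * D) = c • 1 - B * D := by
    rw [smul_add, Matrix.smul_mul, smul_smul, hm, neg_one_smul, ← sub_eq_add_neg]
  have h2 : c • ((1 : Matrix (Fin 3) (Fin 3) ℂ) + D * ((-(c⁻¹)) • B)) = c • 1 - D * B := by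
    rw [smul_add, Matrix.mul_smul, smul_smul, hm, neg_one_smul, ← sub_eq_add_neg]
  have h3 : Matrix.det (c • ((1 : Matrix (Fin 3) (Fin 3) ℂ) + D * ((-(c⁻¹)) • B)))
      = c ^ 3 * Matrix.det ((1 : Matrix (Fin 3) (Fin 3) ℂ) + D * ((-(c⁻¹)) • B)) := by
    rw [Matrix.det_smul]
    norm_num
  calc Matrix.det (c • (1 : Matrix m m ℂ) - B * D)
      = Matrix.det (c • ((1 : Matrix m m ℂ) + ((-(c⁻¹)) • B) * D)) := by rw [h1]
    _ = c ^ (Fintype.card m) * Matrix.det ((1 : Matrix m m ℂ) + ((-(c⁻¹)) • B) * D) := by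
        rw [Matrix.det_smul]
    _ = c ^ (Fintype.card m) * Matrix.det ((1 : Matrix (Fin 3) (Fin 3) ℂ) + D * ((-(c⁻¹)) • B)) := by
        rw [Matrix.det_one_add_mul_comm]
    _ = c ^ (Fintype.card m) * ((c⁻¹)^3 * Matrix.det (c • (1 : Matrix (Fin 3) (Fin 3) ℂ) - D * B)) := by
        rw [← h2, h3, ← mul_assoc ((c⁻¹)^3), ← mul_pow, inv_mul_cancel₀ hc, one_pow, one_mul]
    _ = _ := by ring

end CSComAux

open CSComAux

/-- For even `n ≥ 2` with `n/2` odd, the characteristic polynomial of the adjacency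
matrix of the conjugacy supercommuting graph of `D_{2n}` is
`(λ+1)^(2n-4) (λ⁴ + (4-2n)λ³ + (n²-8n+6)λ² + (4n²-14n+4)λ + 3n² - 8n + 1)`; i.e. the
spectrum is `-1` with multiplicity `2n-4` together with the four roots of the quartic. -/
theorem charpoly_CSCom_dihedral_even_odd (n : ℕ) [NeZero n] (hn : 2 ≤ n)
    (heven : Even n) (hodd : Odd (n / 2)) :
    (cscomAdj (DihedralGroup n)).charpoly =
      (X + 1) ^ (3 * n / 2 - 3) * ((X + 1) ^ (n / 2 - 1) *
        (X ^ 4 + C (4 - 2 * (n : ℂ)) * X ^ 3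
          + C ((n : ℂ) ^ 2 - 8 * (n : ℂ) + 6) * X ^ 2
          + C (4 * (n : ℂ) ^ 2 - 14 * (n : ℂ) + 4) * X
          + C (3 * (n : ℂ) ^ 2 - 8 * (n : ℂ) + 1))) := by
  obtain ⟨m, hm2⟩ := id heven
  have hm : n = 2 * m := by omega
  have hm1 : 1 ≤ m := by omega
  have hmodd : Odd m := by rwa [show n / 2 = m by omega] at hodd
  apply Polynomial.eq_of_infinite_eval_eq
  apply Set.Infinite.mono (s := ({-1} : Set ℂ)ᶜ) ?_
    ((Set.finite_singleton (-1 : ℂ)).infinite_compl)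
  intro x hx
  have hc : x + 1 ≠ 0 := by
    intro h
    exact hx (by simp only [Set.mem_singleton_iff]; linear_combination h)
  simp only [Set.mem_setOf_eq]
  rw [eval_charpoly', adj_eq hn heven hodd,
    show x • (1 : Matrix (DihedralGroup n) (DihedralGroup n) ℂ) - (Umat n * Vmat n - 1)
        = (x + 1) • 1 - Umat n * Vmat n by rw [add_smul, one_smul]; abel,
    det_swap (x + 1) hc, VU_eq hn heven, det_cw, DihedralGroup.card]
  simp only [eval_mul, eval_pow, eval_add, eval_X, eval_one, eval_C]
  rw [show 3 * n / 2 - 3 = 3 * m - 3 by omega, show n / 2 - 1 = m - 1 by omega,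
    show 2 * n = 4 * m by omega]
  have h3 : (x + 1) ^ (4 * m)
      = (x + 1) ^ 3 * ((x + 1) ^ (3 * m - 3) * (x + 1) ^ (m - 1) * (x + 1)) := by
    have he : (x + 1) ^ 3 * ((x + 1) ^ (3 * m - 3) * (x + 1) ^ (m - 1) * (x + 1))
        = (x + 1) ^ (3 + ((3 * m - 3) + (m - 1) + 1)) := by
      rw [pow_add, pow_add, pow_add, pow_one]
    rw [he, show 3 + ((3 * m - 3) + (m - 1) + 1) = 4 * m by omega]
  rw [h3]
  field_simp
  ring
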